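/- arXiv:2310.10626 — 3 statements merged into one kernel-verified Lean document; each statement's English description precedes it below -/
import Mathlib

section
/- Let L be an n×k quaternionic matrix such that L L† is positive definite (in particular invertible), and let M be a k×k quaternionic matrix with purely imaginary entries that is symmetric (Mᵀ = M, so M† = -M), satisfying L† L - M² = I_k. Then μ := L M L† (L L†)⁻¹ satisfies μ† = -μ, μ L = L M, and L L† - μ² = I_n; moreover μ is the unique matrix with μ L = L M. -/
set_option maxHeartbeats 1000000

open Matrix

/-- For ADHM-type data: `L` an `n × k` quaternionic matrix with `L * Lᴴ` invertible
(as implied by positive definiteness) and `M` a symmetric purely imaginary `k × k`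
quaternionic matrix (`Mᵀ = M`, `Mᴴ = -M`) with `Lᴴ * L - M² = 1`, the matrix
`μ := L * M * Lᴴ * (L * Lᴴ)⁻¹` satisfies `μᴴ = -μ`, `μ * L = L * M`,
`L * Lᴴ - μ² = 1`, and is the unique matrix with `μ * L = L * M`. -/
theorem exists_unique_mu (n k : ℕ)
    (L : Matrix (Fin n) (Fin k) (Quaternion ℝ))
    (M : Matrix (Fin k) (Fin k) (Quaternion ℝ))
    (hMsymm : Mᵀ = M) (hMim : Mᴴ = -M)
    (hInv : Invertible (L * Lᴴ))
    (hLM : Lᴴ * L - M * M = 1) :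
    (L * M * Lᴴ * ⅟(L * Lᴴ))ᴴ = -(L * M * Lᴴ * ⅟(L * Lᴴ)) ∧
    (L * M * Lᴴ * ⅟(L * Lᴴ)) * L = L * M ∧
    L * Lᴴ - (L * M * Lᴴ * ⅟(L * Lᴴ)) * (L * M * Lᴴ * ⅟(L * Lᴴ)) = 1 ∧
    ∀ ν : Matrix (Fin n) (Fin n) (Quaternion ℝ),
      ν * L = L * M → ν = L * M * Lᴴ * ⅟(L * Lᴴ) := by
  have hA : (L * Lᴴ)ᴴ = L * Lᴴ := by
    rw [conjTranspose_mul, conjTranspose_conjTranspose]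
  have hLL : Lᴴ * L = 1 + M * M := by
    rw [← hLM]; noncomm_ring
  have hcommM : M * (Lᴴ * L) = (Lᴴ * L) * M := by
    rw [hLL]; noncomm_ring
  have hcomm : Commute (L * M * Lᴴ) (L * Lᴴ) := by
    show _ * _ = _ * _
    calc (L * M * Lᴴ) * (L * Lᴴ) = L * (M * (Lᴴ * L)) * Lᴴ := by
          simp only [Matrix.mul_assoc]
      _ = L * ((Lᴴ * L) * M) * Lᴴ := by rw [hcommM]
      _ = (L * Lᴴ) * (L * M * Lᴴ) := by simp only [Matrix.mul_assoc]
  have hcommInv : (L * M * Lᴴ) * ⅟(L * Lᴴ) = ⅟(L * Lᴴ) * (L * M * Lᴴ) :=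
    hcomm.invOf_right
  have hinvA : (⅟(L * Lᴴ))ᴴ = ⅟(L * Lᴴ) := by
    have hright : (L * Lᴴ) * (⅟(L * Lᴴ))ᴴ = 1 := by
      calc (L * Lᴴ) * (⅟(L * Lᴴ))ᴴ = (⅟(L * Lᴴ) * (L * Lᴴ)ᴴ)ᴴ := by
            rw [conjTranspose_mul, conjTranspose_conjTranspose]
        _ = 1 := by rw [hA, invOf_mul_self, conjTranspose_one]
    exact (invOf_eq_right_inv hright).symm
  have h2 : (L * M * Lᴴ * ⅟(L * Lᴴ)) * L = L * M := by
    rw [hcommInv]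
    calc ⅟(L * Lᴴ) * (L * M * Lᴴ) * L
        = ⅟(L * Lᴴ) * (L * (M * (Lᴴ * L))) := by simp only [Matrix.mul_assoc]
      _ = ⅟(L * Lᴴ) * (L * ((Lᴴ * L) * M)) := by rw [hcommM]
      _ = ⅟(L * Lᴴ) * (L * Lᴴ) * (L * M) := by simp only [Matrix.mul_assoc]
      _ = L * M := by rw [invOf_mul_self, Matrix.one_mul]
  have h1 : (L * M * Lᴴ * ⅟(L * Lᴴ))ᴴ = -(L * M * Lᴴ * ⅟(L * Lᴴ)) := by
    rw [conjTranspose_mul, hinvA, conjTranspose_mul, conjTranspose_mul,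
      conjTranspose_conjTranspose, hMim, hcommInv]
    simp only [Matrix.mul_assoc, Matrix.neg_mul, Matrix.mul_neg]
  have h3 : L * Lᴴ - (L * M * Lᴴ * ⅟(L * Lᴴ)) * (L * M * Lᴴ * ⅟(L * Lᴴ)) = 1 := by
    have hsq : (L * M * Lᴴ * ⅟(L * Lᴴ)) * (L * M * Lᴴ * ⅟(L * Lᴴ)) * (L * Lᴴ)
        = (L * Lᴴ) * (L * Lᴴ) - (L * Lᴴ) := by
      calc (L * M * Lᴴ * ⅟(L * Lᴴ)) * (L * M * Lᴴ * ⅟(L * Lᴴ)) * (L * Lᴴ)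
          = (L * M * Lᴴ * ⅟(L * Lᴴ)) * (L * M * Lᴴ) * (⅟(L * Lᴴ) * (L * Lᴴ)) := by
            simp only [Matrix.mul_assoc]
        _ = (L * M * Lᴴ * ⅟(L * Lᴴ)) * (L * M * Lᴴ) := by
            rw [invOf_mul_self, Matrix.mul_one]
        _ = ((L * M * Lᴴ * ⅟(L * Lᴴ)) * L) * (M * Lᴴ) := by
            simp only [Matrix.mul_assoc]
        _ = L * (M * M) * Lᴴ := by rw [h2]; simp only [Matrix.mul_assoc]
        _ = L * (Lᴴ * L - 1) * Lᴴ := by rw [show M * M = Lᴴ * L - 1 from by rw [hLL]; noncomm_ring]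
        _ = (L * Lᴴ) * (L * Lᴴ) - (L * Lᴴ) := by
            rw [Matrix.mul_sub, Matrix.sub_mul, Matrix.mul_one]
            simp only [Matrix.mul_assoc]
    calc L * Lᴴ - (L * M * Lᴴ * ⅟(L * Lᴴ)) * (L * M * Lᴴ * ⅟(L * Lᴴ))
        = L * Lᴴ - ((L * M * Lᴴ * ⅟(L * Lᴴ)) * (L * M * Lᴴ * ⅟(L * Lᴴ)) * (L * Lᴴ)) * ⅟(L * Lᴴ) := by
          rw [Matrix.mul_assoc _ (L * Lᴴ) _, mul_invOf_self, Matrix.mul_one]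
      _ = L * Lᴴ - (L * Lᴴ * (L * Lᴴ) - L * Lᴴ) * ⅟(L * Lᴴ) := by rw [hsq]
      _ = 1 := by
          rw [Matrix.sub_mul, Matrix.mul_assoc, mul_invOf_self, Matrix.mul_one, sub_sub_cancel]
  refine ⟨h1, h2, h3, fun ν hν => ?_⟩
  calc ν = ν * (L * Lᴴ) * ⅟(L * Lᴴ) := by
        rw [Matrix.mul_assoc, mul_invOf_self, Matrix.mul_one]
    _ = (ν * L) * Lᴴ * ⅟(L * Lᴴ) := by simp only [Matrix.mul_assoc]
    _ = L * M * Lᴴ * ⅟(L * Lᴴ) := by rw [hν]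
end

section
/- Let L, L̃ be n×k quaternionic matrices with L L† and L̃ L̃† invertible, and M a symmetric purely imaginary k×k quaternionic matrix such that L† L - M² = I_k and L̃† L̃ - M² = I_k. Then q := (L̃ L̃†)⁻¹ L̃ L† satisfies q q† = I_n and L̃ = q L. Thus L is unique up to left multiplication by an element of Sp(n). -/
open Matrix

/-- If `L` and `L̃` are `n × k` quaternionic matrices with `L * Lᴴ` and `L̃ * L̃ᴴ`
invertible, and `M` is a symmetric purely imaginary `k × k` quaternionic matrix with
`Lᴴ * L - M² = 1 = L̃ᴴ * L̃ - M²`, then `q := (L̃ * L̃ᴴ)⁻¹ * L̃ * Lᴴ` satisfies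
`q * qᴴ = 1` and `L̃ = q * L`; so `L` is unique up to left multiplication by `Sp(n)`. -/
theorem L_unique_up_to_Sp (n k : ℕ)
    (L Lt : Matrix (Fin n) (Fin k) (Quaternion ℝ))
    (M : Matrix (Fin k) (Fin k) (Quaternion ℝ))
    (hMsymm : Mᵀ = M) (hMim : Mᴴ = -M)
    (hInv : Invertible (L * Lᴴ)) (hInvt : Invertible (Lt * Ltᴴ))
    (hLM : Lᴴ * L - M * M = 1) (hLtM : Ltᴴ * Lt - M * M = 1) :
    (⅟(Lt * Ltᴴ) * Lt * Lᴴ) * (⅟(Lt * Ltᴴ) * Lt * Lᴴ)ᴴ = 1 ∧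
    Lt = (⅟(Lt * Ltᴴ) * Lt * Lᴴ) * L := by
  have h1 : Lᴴ * L = Ltᴴ * Lt := by
    have e1 := sub_eq_iff_eq_add.mp hLM
    have e2 := sub_eq_iff_eq_add.mp hLtM
    rw [e1, e2]
  have hA : (Lt * Ltᴴ)ᴴ = Lt * Ltᴴ := by
    rw [conjTranspose_mul, conjTranspose_conjTranspose]
  have hconj : (⅟(Lt * Ltᴴ))ᴴ = ⅟(Lt * Ltᴴ) := by
    have h := congrArg conjTranspose (invOf_mul_self (Lt * Ltᴴ))
    rw [conjTranspose_mul, conjTranspose_one, hA] at h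
    exact (invOf_eq_right_inv h).symm
  constructor
  · rw [conjTranspose_mul, conjTranspose_mul, conjTranspose_conjTranspose, hconj]
    simp only [Matrix.mul_assoc]
    rw [← Matrix.mul_assoc Lᴴ L, h1]
    simp only [Matrix.mul_assoc]
    rw [← Matrix.mul_assoc Lt Ltᴴ (Lt * (Ltᴴ * ⅟(Lt * Ltᴴ))),
        ← Matrix.mul_assoc Lt Ltᴴ (⅟(Lt * Ltᴴ)),
        ← Matrix.mul_assoc (⅟(Lt * Ltᴴ)) (Lt * Ltᴴ),
        invOf_mul_self, Matrix.one_mul, mul_invOf_self]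
  · rw [Matrix.mul_assoc (⅟(Lt * Ltᴴ) * Lt) Lᴴ L, h1,
        Matrix.mul_assoc (⅟(Lt * Ltᴴ)) Lt (Ltᴴ * Lt),
        ← Matrix.mul_assoc Lt Ltᴴ Lt,
        ← Matrix.mul_assoc (⅟(Lt * Ltᴴ)) (Lt * Ltᴴ) Lt,
        invOf_mul_self, Matrix.one_mul]
end

section
/- Let L be an n×k quaternionic matrix with L L† invertible and M a symmetric purely imaginary k×k quaternionic matrix with L† L - M² = I_k. Suppose p is a unit quaternion and Q is a real orthogonal k×k matrix with Q M Qᵀ = p M p† (where p acts entrywise by conjugation). Then q := p (L L†)⁻¹ L p† Q L† is the unique n×n quaternionic matrix satisfying q L Qᵀ = p L p†, and moreover q q† = I_n. -/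
/-!
Write `P` for the scalar matrix `p • 1` and regard `Q` as a quaternionic matrix; both are unitary.
The hypothesis `Q M Qᵀ = P M P†` then says that `U := P† Q` commutes with `M`, hence with
`L† L = 1 + M²`, and therefore `L U L†` commutes with `A := L L†`. This makes `A⁻¹ L U L†` the
unique solution of `X L = L U`, and it is unitary since `(A⁻¹ L U L†) L = L U`. Multiplying by the
unitaries `P` and `Q` turns `q L Qᵀ = P L P†` into `(P† q) L = L U`, so `q = P A⁻¹ L U L†`.
-/

open Matrix

theorem commute_star_mul_of_conj_eq {R : Type*} [Monoid R] [StarMul R] {P Q x : R}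
    (hP : P ∈ unitary R) (hQ : Q ∈ unitary R) (h : Q * x * star Q = P * x * star P) :
    Commute (star P * Q) x := by
  rw [commute_unitary_iff_star_right_conjugate (mul_mem (Unitary.star_mem hP) hQ),
    star_mul, star_star]
  calc star P * Q * x * (star Q * P) = star P * (Q * x * star Q) * P := by simp only [mul_assoc]
    _ = x := by
      rw [h]
      simp only [← mul_assoc, Unitary.star_mul_self_of_mem hP, one_mul]
      rw [mul_assoc, Unitary.star_mul_self_of_mem hP, mul_one]

namespace Matrix

section Scalar

variable {n R : Type*} [DecidableEq n] [Semiring R]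

theorem map_mul_mul_eq_smul_one_mul_mul_smul_one [Fintype n] {m : Type*} [Fintype m]
    [DecidableEq m] (a b : R) (X : Matrix n m R) :
    X.map (fun x => a * x * b) = (a • (1 : Matrix n n R)) * X * (b • (1 : Matrix m m R)) := by
  ext i j
  simp [smul_one_eq_diagonal, diagonal_mul, mul_diagonal]

variable [StarRing R]

theorem conjTranspose_smul_one (a : R) : (a • (1 : Matrix n n R))ᴴ = star a • 1 := by
  simp [smul_one_eq_diagonal, diagonal_conjTranspose, Pi.star_def]

theorem smul_one_mem_unitary [Fintype n] {a : R} (ha : a ∈ unitary R) :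
    a • (1 : Matrix n n R) ∈ unitary (Matrix n n R) := by
  rw [Unitary.mem_iff, star_eq_conjTranspose, conjTranspose_smul_one, smul_one_eq_diagonal,
    smul_one_eq_diagonal, diagonal_mul_diagonal, diagonal_mul_diagonal,
    Unitary.star_mul_self_of_mem ha, Unitary.mul_star_self_of_mem ha, diagonal_one]
  exact ⟨rfl, rfl⟩

end Scalar

section QuaternionMap

variable {n R : Type*} [CommRing R] [StarRing R] [TrivialStar R]

theorem map_algebraMap_quaternion_conjTranspose {m : Type*} (Q : Matrix m n R) :
    (Q.map (algebraMap R (Quaternion R)))ᴴ = (Q.map (algebraMap R (Quaternion R)))ᵀ := by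
  rw [← conjTranspose_map _ fun r => by
    rw [star_trivial, Quaternion.algebraMap_def, Quaternion.star_coe],
    conjTranspose_eq_transpose_of_trivial, transpose_map]

theorem map_algebraMap_quaternion_mem_unitary [Fintype n] [DecidableEq n] {Q : Matrix n n R}
    (hQ : Q * Qᵀ = 1) :
    Q.map (algebraMap R (Quaternion R)) ∈ unitary (Matrix n n (Quaternion R)) := by
  rw [Unitary.mem_iff, star_eq_conjTranspose, map_algebraMap_quaternion_conjTranspose,
    ← transpose_map, ← Matrix.map_mul, ← Matrix.map_mul, mul_eq_one_comm.mp hQ, hQ,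
    Matrix.map_one _ (map_zero _) (map_one _)]
  exact ⟨rfl, rfl⟩

end QuaternionMap

section Intertwining

variable {m l R : Type*} [Fintype m] [Fintype l] [Semiring R] [StarRing R]
  (L : Matrix m l R) {U : Matrix l l R}

theorem commute_mul_mul_conjTranspose (hU : Commute U (Lᴴ * L)) :
    Commute (L * U * Lᴴ) (L * Lᴴ) :=
  calc L * U * Lᴴ * (L * Lᴴ) = L * (U * (Lᴴ * L)) * Lᴴ := by simp only [Matrix.mul_assoc]
    _ = L * ((Lᴴ * L) * U) * Lᴴ := by rw [hU.eq]
    _ = L * Lᴴ * (L * U * Lᴴ) := by simp only [Matrix.mul_assoc]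

variable [DecidableEq m] [Invertible (L * Lᴴ)]

theorem mul_eq_mul_iff_eq_invOf_mul (hU : Commute U (Lᴴ * L)) (X : Matrix m m R) :
    X * L = L * U ↔ X = ⅟(L * Lᴴ) * L * U * Lᴴ := by
  constructor
  · intro h
    calc X = X * (L * Lᴴ) * ⅟(L * Lᴴ) := by rw [mul_invOf_cancel_right]
      _ = L * U * Lᴴ * ⅟(L * Lᴴ) := by rw [← Matrix.mul_assoc X, h]
      _ = ⅟(L * Lᴴ) * (L * U * Lᴴ) := ((commute_mul_mul_conjTranspose L hU).invOf_right).eq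
      _ = ⅟(L * Lᴴ) * L * U * Lᴴ := by simp only [Matrix.mul_assoc]
  · rintro rfl
    calc ⅟(L * Lᴴ) * L * U * Lᴴ * L = ⅟(L * Lᴴ) * L * (U * (Lᴴ * L)) := by
          simp only [Matrix.mul_assoc]
      _ = ⅟(L * Lᴴ) * (L * Lᴴ) * L * U := by rw [hU.eq]; simp only [Matrix.mul_assoc]
      _ = L * U := by rw [invOf_mul_self, Matrix.one_mul]

theorem invOf_mul_mul_mul_conjTranspose_mul_conjTranspose_self [DecidableEq l]
    (hU : Commute U (Lᴴ * L)) (hUU : U * Uᴴ = 1) :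
    ⅟(L * Lᴴ) * L * U * Lᴴ * (⅟(L * Lᴴ) * L * U * Lᴴ)ᴴ = 1 := by
  have hq := (mul_eq_mul_iff_eq_invOf_mul L hU _).2 rfl
  calc ⅟(L * Lᴴ) * L * U * Lᴴ * (⅟(L * Lᴴ) * L * U * Lᴴ)ᴴ
        = (⅟(L * Lᴴ) * L * U * Lᴴ * L) * Uᴴ * Lᴴ * (⅟(L * Lᴴ))ᴴ := by
          simp only [conjTranspose_mul, conjTranspose_conjTranspose, Matrix.mul_assoc]
      _ = L * (U * Uᴴ) * Lᴴ * (⅟(L * Lᴴ))ᴴ := by rw [hq]; simp only [Matrix.mul_assoc]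
      _ = (⅟(L * Lᴴ) * (L * Lᴴ))ᴴ := by
          rw [hUU]
          simp only [conjTranspose_mul, conjTranspose_conjTranspose, Matrix.mul_one,
            Matrix.mul_assoc]
      _ = 1 := by rw [invOf_mul_self, conjTranspose_one]

theorem mul_mul_conjTranspose_eq_iff [DecidableEq l] {P : Matrix m m R} {P' Q : Matrix l l R}
    (hP : P ∈ unitary (Matrix m m R)) (hQ : Q ∈ unitary (Matrix l l R))
    (hU : Commute (P'ᴴ * Q) (Lᴴ * L)) (X : Matrix m m R) :
    X * L * Qᴴ = P * L * P'ᴴ ↔ X = P * (⅟(L * Lᴴ) * L * (P'ᴴ * Q) * Lᴴ) := by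
  have hPP : Pᴴ * P = 1 := Unitary.star_mul_self_of_mem hP
  have hPP' : P * Pᴴ = 1 := Unitary.mul_star_self_of_mem hP
  have hQQ : Qᴴ * Q = 1 := Unitary.star_mul_self_of_mem hQ
  have hQQ' : Q * Qᴴ = 1 := Unitary.mul_star_self_of_mem hQ
  constructor
  · intro h
    have hX : Pᴴ * X * L = L * (P'ᴴ * Q) :=
      calc Pᴴ * X * L = Pᴴ * (X * L * Qᴴ) * Q := by
            simp only [Matrix.mul_assoc, hQQ, Matrix.mul_one]
        _ = L * (P'ᴴ * Q) := by rw [h]; simp only [← Matrix.mul_assoc, hPP, Matrix.one_mul]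
    rw [← (mul_eq_mul_iff_eq_invOf_mul L hU _).1 hX, ← Matrix.mul_assoc, hPP',
      Matrix.one_mul]
  · rintro rfl
    calc P * (⅟(L * Lᴴ) * L * (P'ᴴ * Q) * Lᴴ) * L * Qᴴ
        = P * (⅟(L * Lᴴ) * L * (P'ᴴ * Q) * Lᴴ * L) * Qᴴ := by simp only [Matrix.mul_assoc]
      _ = P * L * P'ᴴ := by
          rw [(mul_eq_mul_iff_eq_invOf_mul L hU _).2 rfl]
          simp only [Matrix.mul_assoc, hQQ', Matrix.mul_one]

end Intertwining

end Matrix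

theorem Q_determines_q_general (n k : ℕ)
    (L : Matrix (Fin n) (Fin k) (Quaternion ℝ))
    (M : Matrix (Fin k) (Fin k) (Quaternion ℝ))
    (hInv : Invertible (L * Lᴴ))
    (hLM : Lᴴ * L - M * M = 1)
    (p : Quaternion ℝ) (hp : p * star p = 1)
    (Q : Matrix (Fin k) (Fin k) ℝ) (hQ : Q * Qᵀ = 1)
    (hQM : (Q.map (algebraMap ℝ (Quaternion ℝ))) * M * (Q.map (algebraMap ℝ (Quaternion ℝ)))ᵀ
        = M.map (fun x => p * x * star p)) :
    (((p • (1 : Matrix (Fin n) (Fin n) (Quaternion ℝ))) * ⅟(L * Lᴴ) * L *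
        (star p • (1 : Matrix (Fin k) (Fin k) (Quaternion ℝ))) *
        (Q.map (algebraMap ℝ (Quaternion ℝ))) * Lᴴ) * L *
        (Q.map (algebraMap ℝ (Quaternion ℝ)))ᵀ = L.map (fun x => p * x * star p)) ∧
    (((p • (1 : Matrix (Fin n) (Fin n) (Quaternion ℝ))) * ⅟(L * Lᴴ) * L *
        (star p • (1 : Matrix (Fin k) (Fin k) (Quaternion ℝ))) *
        (Q.map (algebraMap ℝ (Quaternion ℝ))) * Lᴴ) *
      ((p • (1 : Matrix (Fin n) (Fin n) (Quaternion ℝ))) * ⅟(L * Lᴴ) * L *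
        (star p • (1 : Matrix (Fin k) (Fin k) (Quaternion ℝ))) *
        (Q.map (algebraMap ℝ (Quaternion ℝ))) * Lᴴ)ᴴ = 1) ∧
    ∀ q : Matrix (Fin n) (Fin n) (Quaternion ℝ),
      q * L * (Q.map (algebraMap ℝ (Quaternion ℝ)))ᵀ = L.map (fun x => p * x * star p) →
      q = (p • (1 : Matrix (Fin n) (Fin n) (Quaternion ℝ))) * ⅟(L * Lᴴ) * L *
        (star p • (1 : Matrix (Fin k) (Fin k) (Quaternion ℝ))) *
        (Q.map (algebraMap ℝ (Quaternion ℝ))) * Lᴴ := by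
  have hp_unitary : p ∈ unitary (Quaternion ℝ) :=
    Unitary.mem_iff.2 ⟨by rw [Quaternion.star_mul_self, ← Quaternion.self_mul_star, hp], hp⟩
  simp only [← map_algebraMap_quaternion_conjTranspose, map_mul_mul_eq_smul_one_mul_mul_smul_one,
    ← conjTranspose_smul_one] at hQM ⊢
  set Pn := p • (1 : Matrix (Fin n) (Fin n) (Quaternion ℝ))
  set Pk := p • (1 : Matrix (Fin k) (Fin k) (Quaternion ℝ))
  set Q' := Q.map (algebraMap ℝ (Quaternion ℝ))
  have hPk : Pk ∈ unitary _ := smul_one_mem_unitary hp_unitary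
  have hQ' : Q' ∈ unitary _ := map_algebraMap_quaternion_mem_unitary hQ
  have hU : Commute (Pkᴴ * Q') (Lᴴ * L) := by
    have hM := commute_star_mul_of_conj_eq hPk hQ' hQM
    rw [eq_add_of_sub_eq hLM]
    exact (Commute.one_right _).add_right (hM.mul_right hM)
  have hq := mul_mul_conjTranspose_eq_iff L (smul_one_mem_unitary hp_unitary) hQ' hU
  have hPnPn : Pn * Pnᴴ = 1 := Unitary.mul_star_self_of_mem (smul_one_mem_unitary hp_unitary)
  have hUU : Pkᴴ * Q' * (Pkᴴ * Q')ᴴ = 1 :=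
    Unitary.mul_star_self_of_mem (mul_mem (Unitary.star_mem hPk) hQ')
  rw [show Pn * ⅟(L * Lᴴ) * L * Pkᴴ * Q' * Lᴴ = Pn * (⅟(L * Lᴴ) * L * (Pkᴴ * Q') * Lᴴ) by
    simp only [Matrix.mul_assoc]]
  refine ⟨(hq _).2 rfl, ?_, fun X hX => (hq X).1 hX⟩
  rw [conjTranspose_mul, Matrix.mul_assoc, ← Matrix.mul_assoc _ _ Pnᴴ,
    invOf_mul_mul_mul_conjTranspose_mul_conjTranspose_self L hU hUU, Matrix.one_mul, hPnPn]

/-- If `Q M Qᵀ = p M p†` for a unit quaternion `p` and real orthogonal `Q`, then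
`q := p (L Lᴴ)⁻¹ L p† Q Lᴴ` is the unique quaternionic matrix with
`q L Qᵀ = p L p†`, and it satisfies `q qᴴ = 1`.  Scalar quaternions act as the
corresponding scalar matrices, and `Q` is viewed as a quaternionic matrix via the
algebra map; `p X p†` denotes entrywise conjugation by `p`. -/
theorem Q_determines_q (n k : ℕ)
    (L : Matrix (Fin n) (Fin k) (Quaternion ℝ))
    (M : Matrix (Fin k) (Fin k) (Quaternion ℝ))
    (hMsymm : Mᵀ = M) (hMim : Mᴴ = -M)
    (hInv : Invertible (L * Lᴴ))
    (hLM : Lᴴ * L - M * M = 1)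
    (p : Quaternion ℝ) (hp : p * star p = 1)
    (Q : Matrix (Fin k) (Fin k) ℝ) (hQ : Q * Qᵀ = 1)
    (hQM : (Q.map (algebraMap ℝ (Quaternion ℝ))) * M * (Q.map (algebraMap ℝ (Quaternion ℝ)))ᵀ
        = M.map (fun x => p * x * star p)) :
    (((p • (1 : Matrix (Fin n) (Fin n) (Quaternion ℝ))) * ⅟(L * Lᴴ) * L *
        (star p • (1 : Matrix (Fin k) (Fin k) (Quaternion ℝ))) *
        (Q.map (algebraMap ℝ (Quaternion ℝ))) * Lᴴ) * L *
        (Q.map (algebraMap ℝ (Quaternion ℝ)))ᵀ = L.map (fun x => p * x * star p)) ∧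
    (((p • (1 : Matrix (Fin n) (Fin n) (Quaternion ℝ))) * ⅟(L * Lᴴ) * L *
        (star p • (1 : Matrix (Fin k) (Fin k) (Quaternion ℝ))) *
        (Q.map (algebraMap ℝ (Quaternion ℝ))) * Lᴴ) *
      ((p • (1 : Matrix (Fin n) (Fin n) (Quaternion ℝ))) * ⅟(L * Lᴴ) * L *
        (star p • (1 : Matrix (Fin k) (Fin k) (Quaternion ℝ))) *
        (Q.map (algebraMap ℝ (Quaternion ℝ))) * Lᴴ)ᴴ = 1) ∧
    ∀ q : Matrix (Fin n) (Fin n) (Quaternion ℝ),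
      q * L * (Q.map (algebraMap ℝ (Quaternion ℝ)))ᵀ = L.map (fun x => p * x * star p) →
      q = (p • (1 : Matrix (Fin n) (Fin n) (Quaternion ℝ))) * ⅟(L * Lᴴ) * L *
        (star p • (1 : Matrix (Fin k) (Fin k) (Quaternion ℝ))) *
        (Q.map (algebraMap ℝ (Quaternion ℝ))) * Lᴴ :=
  Q_determines_q_general n k L M hInv hLM p hp Q hQ hQM
end
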